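/- Let S be the fuzzy sphere algebra with hermitian generators X₁,X₂,X₃, and let α = (√(4+ℏ²) − ℏ)/2. Define the 2×2 matrix P over S by P = (1/√(4+ℏ²))·[[α·1 + X₃, X₁ + i·X₂],[X₁ − i·X₂, α·1 − X₃]]. Then P² = P, and P is self-adjoint in the sense that (P_{ab})* = P_{ba} for a,b = 1,2. -/
import Mathlib


/-- The totally antisymmetric Levi-Civita symbol `ε_{ijk}` on three indices,
with `ε₁₂₃ = 1`. -/
def eps (i j k : Fin 3) : ℤ :=
  if (i, j, k) = (0, 1, 2) ∨ (i, j, k) = (1, 2, 0) ∨ (i, j, k) = (2, 0, 1) then 1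
  else if (i, j, k) = (2, 1, 0) ∨ (i, j, k) = (1, 0, 2) ∨ (i, j, k) = (0, 2, 1) then -1
  else 0

/-- The monopole projection
`P = (1/√(4+ℏ²))·[[α·1 + X₃, X₁ + i·X₂],[X₁ − i·X₂, α·1 − X₃]]`,
with `α = (√(4+ℏ²) − ℏ)/2`. -/
noncomputable def monopoleP (ℏ : ℝ) {S : Type*} [Ring S] [Algebra ℂ S]
    (X : Fin 3 → S) (a b : Fin 2) : S :=
  ((Real.sqrt (4 + ℏ ^ 2) : ℂ))⁻¹ •
    (if a = 0 ∧ b = 0 then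
      (((Real.sqrt (4 + ℏ ^ 2) - ℏ) / 2 : ℝ) : ℂ) • (1 : S) + X 2
    else if a = 0 ∧ b = 1 then X 0 + Complex.I • X 1
    else if a = 1 ∧ b = 0 then X 0 - Complex.I • X 1
    else (((Real.sqrt (4 + ℏ ^ 2) - ℏ) / 2 : ℝ) : ℂ) • (1 : S) - X 2)

section Aux
variable (ℏ r : ℝ) {S : Type*} [Ring S] [Algebra ℂ S] (X : Fin 3 → S)

lemma fz_key00 (hr2 : (r:ℂ)^2 = 4 + (ℏ:ℂ)^2)
    (h01 : X 0 * X 1 - X 1 * X 0 = (Complex.I * ℏ) • X 2)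
    (hs : X 0 * X 0 + X 1 * X 1 + X 2 * X 2 = 1) :
    ((((r - ℏ) / 2 : ℝ) : ℂ) • (1:S) + X 2) * ((((r - ℏ) / 2 : ℝ) : ℂ) • (1:S) + X 2)
      + (X 0 + Complex.I • X 1) * (X 0 - Complex.I • X 1)
      = (r : ℂ) • ((((r - ℏ) / 2 : ℝ) : ℂ) • (1:S) + X 2) := by
  have e10 : X 1 * X 0 = X 0 * X 1 - (Complex.I * ℏ) • X 2 := by rw [← h01]; abel
  have e22 : X 2 * X 2 = 1 - X 0 * X 0 - X 1 * X 1 := by rw [← hs]; abel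
  simp only [mul_add, add_mul, sub_mul, mul_sub, smul_mul_assoc, mul_smul_comm,
    smul_smul, mul_one, one_mul]
  rw [e10, e22]
  push_cast
  match_scalars <;> (first | ring1 | linear_combination Complex.I_mul_I | linear_combination -Complex.I_mul_I | linear_combination (ℏ:ℂ)*Complex.I_mul_I | linear_combination (-ℏ:ℂ)*Complex.I_mul_I | linear_combination (1/4:ℂ)*hr2 | linear_combination (1/4:ℂ)*hr2 + Complex.I_mul_I | linear_combination (1/4:ℂ)*hr2 + -Complex.I_mul_I | linear_combination (1/4:ℂ)*hr2 + (ℏ:ℂ)*Complex.I_mul_I | linear_combination (1/4:ℂ)*hr2 + (-ℏ:ℂ)*Complex.I_mul_I | linear_combination (-1/4:ℂ)*hr2 | linear_combination (-1/4:ℂ)*hr2 + Complex.I_mul_I | linear_combination (-1/4:ℂ)*hr2 + -Complex.I_mul_I | linear_combination (-1/4:ℂ)*hr2 + (ℏ:ℂ)*Complex.I_mul_I | linear_combination (-1/4:ℂ)*hr2 + (-ℏ:ℂ)*Complex.I_mul_I | linear_combination (1/2:ℂ)*hr2 | linear_combination (1/2:ℂ)*hr2 + Complex.I_mul_I | linear_combination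 (1/2:ℂ)*hr2 + -Complex.I_mul_I | linear_combination (1/2:ℂ)*hr2 + (ℏ:ℂ)*Complex.I_mul_I | linear_combination (1/2:ℂ)*hr2 + (-ℏ:ℂ)*Complex.I_mul_I | linear_combination (-1/2:ℂ)*hr2 | linear_combination (-1/2:ℂ)*hr2 + Complex.I_mul_I | linear_combination (-1/2:ℂ)*hr2 + -Complex.I_mul_I | linear_combination (-1/2:ℂ)*hr2 + (ℏ:ℂ)*Complex.I_mul_I | linear_combination (-1/2:ℂ)*hr2 + (-ℏ:ℂ)*Complex.I_mul_I | linear_combination hr2 | linear_combination hr2 + Complex.I_mul_I | linear_combination hr2 + -Complex.I_mul_I | linear_combination hr2 + (ℏ:ℂ)*Complex.I_mul_I | linear_combination hr2 + (-ℏ:ℂ)*Complex.I_mul_I | linear_combination -hr2 | linear_combination -hr2 + Complex.I_mul_I | linear_combination -hr2 + -Complex.I_mul_I | linear_combination -hr2 + (ℏ:ℂ)*Complex.I_mul_I | linear_combination -hr2 + (-ℏ:ℂ)*Complex.I_mul_I)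

lemma fz_key11 (hr2 : (r:ℂ)^2 = 4 + (ℏ:ℂ)^2)
    (h01 : X 0 * X 1 - X 1 * X 0 = (Complex.I * ℏ) • X 2)
    (hs : X 0 * X 0 + X 1 * X 1 + X 2 * X 2 = 1) :
    (X 0 - Complex.I • X 1) * (X 0 + Complex.I • X 1)
      + ((((r - ℏ) / 2 : ℝ) : ℂ) • (1:S) - X 2) * ((((r - ℏ) / 2 : ℝ) : ℂ) • (1:S) - X 2)
      = (r : ℂ) • ((((r - ℏ) / 2 : ℝ) : ℂ) • (1:S) - X 2) := by
  have e10 : X 1 * X 0 = X 0 * X 1 - (Complex.I * ℏ) • X 2 := by rw [← h01]; abel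
  have e22 : X 2 * X 2 = 1 - X 0 * X 0 - X 1 * X 1 := by rw [← hs]; abel
  simp only [mul_add, add_mul, sub_mul, mul_sub, smul_mul_assoc, mul_smul_comm,
    smul_smul, mul_one, one_mul]
  rw [e10, e22]
  push_cast
  match_scalars <;> (first | ring1 | linear_combination Complex.I_mul_I | linear_combination -Complex.I_mul_I | linear_combination (ℏ:ℂ)*Complex.I_mul_I | linear_combination (-ℏ:ℂ)*Complex.I_mul_I | linear_combination (1/4:ℂ)*hr2 | linear_combination (1/4:ℂ)*hr2 + Complex.I_mul_I | linear_combination (1/4:ℂ)*hr2 + -Complex.I_mul_I | linear_combination (1/4:ℂ)*hr2 + (ℏ:ℂ)*Complex.I_mul_I | linear_combination (1/4:ℂ)*hr2 + (-ℏ:ℂ)*Complex.I_mul_I | linear_combination (-1/4:ℂ)*hr2 | linear_combination (-1/4:ℂ)*hr2 + Complex.I_mul_I | linear_combination (-1/4:ℂ)*hr2 + -Complex.I_mul_I | linear_combination (-1/4:ℂ)*hr2 + (ℏ:ℂ)*Complex.I_mul_I | linear_combination (-1/4:ℂ)*hr2 + (-ℏ:ℂ)*Complex.I_mul_I | linear_combination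 (1/2:ℂ)*hr2 | linear_combination (1/2:ℂ)*hr2 + Complex.I_mul_I | linear_combination (1/2:ℂ)*hr2 + -Complex.I_mul_I | linear_combination (1/2:ℂ)*hr2 + (ℏ:ℂ)*Complex.I_mul_I | linear_combination (1/2:ℂ)*hr2 + (-ℏ:ℂ)*Complex.I_mul_I | linear_combination (-1/2:ℂ)*hr2 | linear_combination (-1/2:ℂ)*hr2 + Complex.I_mul_I | linear_combination (-1/2:ℂ)*hr2 + -Complex.I_mul_I | linear_combination (-1/2:ℂ)*hr2 + (ℏ:ℂ)*Complex.I_mul_I | linear_combination (-1/2:ℂ)*hr2 + (-ℏ:ℂ)*Complex.I_mul_I | linear_combination hr2 | linear_combination hr2 + Complex.I_mul_I | linear_combination hr2 + -Complex.I_mul_I | linear_combination hr2 + (ℏ:ℂ)*Complex.I_mul_I | linear_combination hr2 + (-ℏ:ℂ)*Complex.I_mul_I | linear_combination -hr2 | linear_combination -hr2 + Complex.I_mul_I | linear_combination -hr2 + -Complex.I_mul_I | linear_combination -hr2 + (ℏ:ℂ)*Complex.I_mul_I | linear_combination -hr2 + (-ℏ:ℂ)*Complex.I_mul_I)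

lemma fz_key01
    (h21 : X 2 * X 1 - X 1 * X 2 = -((Complex.I * ℏ) • X 0))
    (h20 : X 2 * X 0 - X 0 * X 2 = (Complex.I * ℏ) • X 1) :
    ((((r - ℏ) / 2 : ℝ) : ℂ) • (1:S) + X 2) * (X 0 + Complex.I • X 1)
      + (X 0 + Complex.I • X 1) * ((((r - ℏ) / 2 : ℝ) : ℂ) • (1:S) - X 2)
      = (r : ℂ) • (X 0 + Complex.I • X 1) := by
  have e20 : X 2 * X 0 = X 0 * X 2 + (Complex.I * ℏ) • X 1 := by rw [← h20]; abel
  have e21 : X 2 * X 1 = X 1 * X 2 - (Complex.I * ℏ) • X 0 := by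
    have h := h21; rw [sub_eq_iff_eq_add] at h; rw [h]; abel
  simp only [mul_add, add_mul, sub_mul, mul_sub, smul_mul_assoc, mul_smul_comm,
    smul_smul, mul_one, one_mul]
  rw [e20, e21]
  push_cast
  match_scalars <;> (first | ring1 | linear_combination Complex.I_mul_I | linear_combination -Complex.I_mul_I | linear_combination (ℏ:ℂ)*Complex.I_mul_I | linear_combination (-ℏ:ℂ)*Complex.I_mul_I | linear_combination (1/4:ℂ)*hr2 | linear_combination (1/4:ℂ)*hr2 + Complex.I_mul_I | linear_combination (1/4:ℂ)*hr2 + -Complex.I_mul_I | linear_combination (1/4:ℂ)*hr2 + (ℏ:ℂ)*Complex.I_mul_I | linear_combination (1/4:ℂ)*hr2 + (-ℏ:ℂ)*Complex.I_mul_I | linear_combination (-1/4:ℂ)*hr2 | linear_combination (-1/4:ℂ)*hr2 + Complex.I_mul_I | linear_combination (-1/4:ℂ)*hr2 + -Complex.I_mul_I | linear_combination (-1/4:ℂ)*hr2 + (ℏ:ℂ)*Complex.I_mul_I | linear_combination (-1/4:ℂ)*hr2 + (-ℏ:ℂ)*Complex.I_mul_I | linear_combination (1/2:ℂ)*hr2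 | linear_combination (1/2:ℂ)*hr2 + Complex.I_mul_I | linear_combination (1/2:ℂ)*hr2 + -Complex.I_mul_I | linear_combination (1/2:ℂ)*hr2 + (ℏ:ℂ)*Complex.I_mul_I | linear_combination (1/2:ℂ)*hr2 + (-ℏ:ℂ)*Complex.I_mul_I | linear_combination (-1/2:ℂ)*hr2 | linear_combination (-1/2:ℂ)*hr2 + Complex.I_mul_I | linear_combination (-1/2:ℂ)*hr2 + -Complex.I_mul_I | linear_combination (-1/2:ℂ)*hr2 + (ℏ:ℂ)*Complex.I_mul_I | linear_combination (-1/2:ℂ)*hr2 + (-ℏ:ℂ)*Complex.I_mul_I | linear_combination hr2 | linear_combination hr2 + Complex.I_mul_I | linear_combination hr2 + -Complex.I_mul_I | linear_combination hr2 + (ℏ:ℂ)*Complex.I_mul_I | linear_combination hr2 + (-ℏ:ℂ)*Complex.I_mul_I | linear_combination -hr2 | linear_combination -hr2 + Complex.I_mul_I | linear_combination -hr2 + -Complex.I_mul_I | linear_combination -hr2 + (ℏ:ℂ)*Complex.I_mul_I | linear_combination -hr2 + (-ℏ:ℂ)*Complex.I_mul_I)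

lemma fz_key10
    (h21 : X 2 * X 1 - X 1 * X 2 = -((Complex.I * ℏ) • X 0))
    (h20 : X 2 * X 0 - X 0 * X 2 = (Complex.I * ℏ) • X 1) :
    (X 0 - Complex.I • X 1) * ((((r - ℏ) / 2 : ℝ) : ℂ) • (1:S) + X 2)
      + ((((r - ℏ) / 2 : ℝ) : ℂ) • (1:S) - X 2) * (X 0 - Complex.I • X 1)
      = (r : ℂ) • (X 0 - Complex.I • X 1) := by
  have e20 : X 2 * X 0 = X 0 * X 2 + (Complex.I * ℏ) • X 1 := by rw [← h20]; abel
  have e21 : X 2 * X 1 = X 1 * X 2 - (Complex.I * ℏ) • X 0 := by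
    have h := h21; rw [sub_eq_iff_eq_add] at h; rw [h]; abel
  simp only [mul_add, add_mul, sub_mul, mul_sub, smul_mul_assoc, mul_smul_comm,
    smul_smul, mul_one, one_mul]
  rw [e20, e21]
  push_cast
  match_scalars <;> (first | ring1 | linear_combination Complex.I_mul_I | linear_combination -Complex.I_mul_I | linear_combination (ℏ:ℂ)*Complex.I_mul_I | linear_combination (-ℏ:ℂ)*Complex.I_mul_I | linear_combination (1/4:ℂ)*hr2 | linear_combination (1/4:ℂ)*hr2 + Complex.I_mul_I | linear_combination (1/4:ℂ)*hr2 + -Complex.I_mul_I | linear_combination (1/4:ℂ)*hr2 + (ℏ:ℂ)*Complex.I_mul_I | linear_combination (1/4:ℂ)*hr2 + (-ℏ:ℂ)*Complex.I_mul_I | linear_combination (-1/4:ℂ)*hr2 | linear_combination (-1/4:ℂ)*hr2 + Complex.I_mul_I | linear_combination (-1/4:ℂ)*hr2 + -Complex.I_mul_I | linear_combination (-1/4:ℂ)*hr2 + (ℏ:ℂ)*Complex.I_mul_I | linear_combination (-1/4:ℂ)*hr2 + (-ℏ:ℂ)*Complex.I_mul_I | linear_combination (1/2:ℂ)*hr2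 | linear_combination (1/2:ℂ)*hr2 + Complex.I_mul_I | linear_combination (1/2:ℂ)*hr2 + -Complex.I_mul_I | linear_combination (1/2:ℂ)*hr2 + (ℏ:ℂ)*Complex.I_mul_I | linear_combination (1/2:ℂ)*hr2 + (-ℏ:ℂ)*Complex.I_mul_I | linear_combination (-1/2:ℂ)*hr2 | linear_combination (-1/2:ℂ)*hr2 + Complex.I_mul_I | linear_combination (-1/2:ℂ)*hr2 + -Complex.I_mul_I | linear_combination (-1/2:ℂ)*hr2 + (ℏ:ℂ)*Complex.I_mul_I | linear_combination (-1/2:ℂ)*hr2 + (-ℏ:ℂ)*Complex.I_mul_I | linear_combination hr2 | linear_combination hr2 + Complex.I_mul_I | linear_combination hr2 + -Complex.I_mul_I | linear_combination hr2 + (ℏ:ℂ)*Complex.I_mul_I | linear_combination hr2 + (-ℏ:ℂ)*Complex.I_mul_I | linear_combination -hr2 | linear_combination -hr2 + Complex.I_mul_I | linear_combination -hr2 + -Complex.I_mul_I | linear_combination -hr2 + (ℏ:ℂ)*Complex.I_mul_I | linear_combination -hr2 + (-ℏ:ℂ)*Complex.I_mul_I)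

end Aux

/-- The monopole projection on the fuzzy sphere is idempotent,
`P² = P`, and self-adjoint, `(P_{ab})* = P_{ba}`. -/
theorem monopole_projection_idempotent_selfadjoint
    (ℏ : ℝ) (hℏ : 0 < ℏ)
    {S : Type*} [Ring S] [StarRing S] [Algebra ℂ S] [StarModule ℂ S]
    (X : Fin 3 → S)
    (hX : ∀ i, star (X i) = X i)
    (hcomm : ∀ i j, X i * X j - X j * X i =
      ∑ k, (Complex.I * (ℏ : ℂ) * (eps i j k : ℂ)) • X k)
    (hsum : (∑ k, X k * X k) = 1) :
    (∀ a b, (∑ c, monopoleP ℏ X a c * monopoleP ℏ X c b) = monopoleP ℏ X a b) ∧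
    (∀ a b, star (monopoleP ℏ X a b) = monopoleP ℏ X b a) := by
  have h01 := hcomm 0 1
  have h21 := hcomm 2 1
  have h20 := hcomm 2 0
  simp [Fin.sum_univ_three, eps] at h01 h21 h20
  have hs := hsum
  rw [Fin.sum_univ_three] at hs
  have hr2 : ((Real.sqrt (4 + ℏ ^ 2) : ℝ) : ℂ)^2 = 4 + (ℏ:ℂ)^2 := by
    have h : (Real.sqrt (4 + ℏ ^ 2))^2 = 4 + ℏ^2 := Real.sq_sqrt (by positivity)
    exact_mod_cast congrArg (Complex.ofReal) h
  have hrne : ((Real.sqrt (4 + ℏ ^ 2) : ℝ) : ℂ) ≠ 0 := by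
    have : (0:ℝ) < Real.sqrt (4 + ℏ ^ 2) := Real.sqrt_pos.mpr (by positivity)
    exact_mod_cast this.ne'
  constructor
  · intro a b
    fin_cases a <;> fin_cases b <;>
      simp only [monopoleP, Fin.sum_univ_two, Fin.zero_eta, Fin.mk_one, Fin.isValue,
        Fin.reduceEq, and_self, and_true, true_and, and_false, false_and,
        one_ne_zero, zero_ne_one, if_true, if_false, reduceIte] <;>
      rw [smul_mul_smul_comm, smul_mul_smul_comm, ← smul_add]
    · rw [fz_key00 ℏ _ X hr2 h01 hs, smul_smul]
      congr 1; field_simp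
    · rw [fz_key01 ℏ _ X h21 h20, smul_smul]
      congr 1; field_simp
    · rw [fz_key10 ℏ _ X h21 h20, smul_smul]
      congr 1; field_simp
    · rw [fz_key11 ℏ _ X hr2 h01 hs, smul_smul]
      congr 1; field_simp
  · intro a b
    fin_cases a <;> fin_cases b <;>
      simp [monopoleP, hX, star_smul, Complex.star_def, Complex.conj_I,
        map_inv₀, Complex.conj_ofReal, sub_eq_add_neg, neg_smul]
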